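/- arXiv:2603.11735 — 3 statements merged into one kernel-verified Lean document; each statement's English description precedes it below -/
import Mathlib

section
/- Let f:ℝ²→ℝ be measurable and suppose that the function x ↦ |x|² f(x²) is Lebesgue integrable on ℝ², where x² denotes the complex square under the identification of ℝ² with ℂ. Then f is Lebesgue integrable on ℝ² and ∫_{ℝ²} |x|² f(x²) dx = (1/2)∫_{ℝ²} f(y) dy. -/
/-!
Squaring maps each of the open half-planes `0 < Im z` and `Im z < 0` injectively onto `ℂ` minus
the ray `[0, ∞)`, a conull set. As a holomorphic map its real Jacobian is `|(z²)'|² = 4 |z|²`, so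
the change of variables formula gives `∫ |x|² f(x²) = ¼ ∫ f` over each half-plane, and the real
axis separating them is null.
-/

open MeasureTheory Set

theorem injOn_sq_of_neg_notMem {R : Type*} [CommRing R] [NoZeroDivisors R] {s : Set R}
    (hs : ∀ z ∈ s, -z ∉ s) : InjOn (· ^ 2) s := by
  intro z hz w hw h
  rcases sq_eq_sq_iff_eq_or_eq_neg.mp h with h | rfl
  · exact h
  · exact absurd hz (hs w hw)

theorem HasDerivWithinAt.hasFDerivWithinAt_restrictScalars_real {g : ℂ → ℂ} {c x : ℂ}
    {s : Set ℂ} (h : HasDerivWithinAt g c s x) :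
    HasFDerivWithinAt g ((ContinuousLinearMap.toSpanSingleton ℂ c).restrictScalars ℝ) s x := by
  simpa [ContinuousLinearMap.smulRight_one_eq_toSpanSingleton] using
    h.hasFDerivWithinAt.restrictScalars ℝ

namespace Complex

theorem abs_det_restrictScalars_toSpanSingleton (c : ℂ) :
    |((ContinuousLinearMap.toSpanSingleton ℂ c).restrictScalars ℝ).det| = ‖c‖ ^ 2 := by
  simp [ContinuousLinearMap.det, LinearMap.det_restrictScalars, Algebra.norm_complex_eq,
    normSq_eq_norm_sq]

theorem hasDerivAt_sq (x : ℂ) : HasDerivAt (· ^ 2) (2 * x) x := by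
  simpa using hasDerivAt_pow 2 x

theorem exists_sq_eq_of_im_ne_zero {w : ℂ} (hw : w.im ≠ 0) : ∃ z : ℂ, 0 < z.im ∧ z ^ 2 = w := by
  obtain ⟨z, rfl⟩ := IsAlgClosed.exists_pow_nat_eq w (n := 2) two_pos
  rcases lt_trichotomy z.im 0 with h | h | h
  · exact ⟨-z, by simpa using h, neg_sq z⟩
  · simp [sq, h] at hw
  · exact ⟨z, h, rfl⟩

variable {E : Type*} [NormedAddCommGroup E] [NormedSpace ℝ E]
  (μ : Measure ℂ) [μ.IsAddHaarMeasure] {s : Set ℂ}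

theorem ae_im_ne_zero : ∀ᵐ w ∂μ, w.im ≠ 0 := by
  have hker : {w : ℂ | w.im = 0} = (LinearMap.ker imLm : Set ℂ) := by
    ext w
    simp [imLm]
  have hnull : μ {w : ℂ | w.im = 0} = 0 := by
    rw [hker]
    refine Measure.addHaar_submodule μ _ fun htop => ?_
    have hI : I ∈ LinearMap.ker imLm := htop ▸ Submodule.mem_top
    simp [imLm] at hI
  exact measure_eq_zero_iff_ae_notMem.mp hnull

theorem ae_mem_sq_image_setOf_im_pos : ∀ᵐ w ∂μ, w ∈ (· ^ 2) '' {z : ℂ | 0 < z.im} :=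
  (ae_im_ne_zero μ).mono fun _ => exists_sq_eq_of_im_ne_zero

theorem ae_mem_sq_image_setOf_im_neg : ∀ᵐ w ∂μ, w ∈ (· ^ 2) '' {z : ℂ | z.im < 0} := by
  filter_upwards [ae_im_ne_zero μ] with w hw
  obtain ⟨z, hz, rfl⟩ := exists_sq_eq_of_im_ne_zero hw
  exact ⟨-z, by simpa using hz, neg_sq z⟩

theorem integrableOn_image_iff_integrableOn_norm_deriv_sq_smul {g g' : ℂ → ℂ}
    (hs : MeasurableSet s) (hg : ∀ x ∈ s, HasDerivWithinAt g (g' x) s x) (hinj : InjOn g s)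
    (f : ℂ → E) :
    IntegrableOn f (g '' s) μ ↔ IntegrableOn (fun x => ‖g' x‖ ^ 2 • f (g x)) s μ := by
  simpa only [abs_det_restrictScalars_toSpanSingleton] using
    integrableOn_image_iff_integrableOn_abs_det_fderiv_smul μ hs
      (fun x hx => (hg x hx).hasFDerivWithinAt_restrictScalars_real) hinj f

theorem integral_image_eq_integral_norm_deriv_sq_smul {g g' : ℂ → ℂ}
    (hs : MeasurableSet s) (hg : ∀ x ∈ s, HasDerivWithinAt g (g' x) s x) (hinj : InjOn g s)
    (f : ℂ → E) :
    ∫ y in g '' s, f y ∂μ = ∫ x in s, ‖g' x‖ ^ 2 • f (g x) ∂μ := by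
  simpa only [abs_det_restrictScalars_toSpanSingleton] using
    integral_image_eq_integral_abs_det_fderiv_smul μ hs
      (fun x hx => (hg x hx).hasFDerivWithinAt_restrictScalars_real) hinj f

variable {μ}

theorem integral_eq_setIntegral_im_pos_add_setIntegral_im_neg {h : ℂ → E}
    (hh : Integrable h μ) :
    ∫ z, h z ∂μ = ∫ z in {z | 0 < z.im}, h z ∂μ + ∫ z in {z | z.im < 0}, h z ∂μ := by
  have hdisj : Disjoint {z : ℂ | 0 < z.im} {z | z.im < 0} :=
    disjoint_left.mpr fun z (hz : 0 < z.im) (hz' : z.im < 0) => hz.not_gt hz'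
  rw [← setIntegral_union hdisj (measurableSet_lt measurable_im measurable_const)
    hh.integrableOn hh.integrableOn, Measure.restrict_eq_self_of_ae_mem]
  filter_upwards [ae_im_ne_zero μ] with w hw
  exact hw.lt_or_gt.symm

theorem norm_two_mul_sq_smul_eq (x : ℂ) (v : E) : ‖2 * x‖ ^ 2 • v = (4 : ℝ) • ‖x‖ ^ 2 • v := by
  rw [smul_smul, norm_mul, Complex.norm_two]
  ring_nf

theorem integrableOn_norm_sq_smul_comp_sq_iff (hs : MeasurableSet s) (hneg : ∀ z ∈ s, -z ∉ s)
    (hcover : ∀ᵐ w ∂μ, w ∈ (· ^ 2) '' s) (f : ℂ → E) :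
    IntegrableOn (fun x => ‖x‖ ^ 2 • f (x ^ 2)) s μ ↔ Integrable f μ := by
  have key := integrableOn_image_iff_integrableOn_norm_deriv_sq_smul μ hs
    (fun x _ => (hasDerivAt_sq x).hasDerivWithinAt) (injOn_sq_of_neg_notMem hneg) f
  rw [IntegrableOn, Measure.restrict_eq_self_of_ae_mem hcover] at key
  simp only [key, norm_two_mul_sq_smul_eq, IntegrableOn,
    integrable_fun_smul_iff (four_ne_zero (α := ℝ))]

theorem setIntegral_norm_sq_smul_comp_sq (hs : MeasurableSet s) (hneg : ∀ z ∈ s, -z ∉ s)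
    (hcover : ∀ᵐ w ∂μ, w ∈ (· ^ 2) '' s) (f : ℂ → E) :
    ∫ x in s, ‖x‖ ^ 2 • f (x ^ 2) ∂μ = (1 / 4 : ℝ) • ∫ y, f y ∂μ := by
  have key := integral_image_eq_integral_norm_deriv_sq_smul μ hs
    (fun x _ => (hasDerivAt_sq x).hasDerivWithinAt) (injOn_sq_of_neg_notMem hneg) f
  simp only [Measure.restrict_eq_self_of_ae_mem hcover, norm_two_mul_sq_smul_eq,
    integral_smul] at key
  rw [key, smul_smul]
  norm_num

theorem neg_notMem_setOf_im_pos : ∀ z ∈ {z : ℂ | 0 < z.im}, -z ∉ {z : ℂ | 0 < z.im} :=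
  fun z (hz : 0 < z.im) (hz' : 0 < (-z).im) => by simp at hz'; linarith

theorem neg_notMem_setOf_im_neg : ∀ z ∈ {z : ℂ | z.im < 0}, -z ∉ {z : ℂ | z.im < 0} :=
  fun z (hz : z.im < 0) (hz' : (-z).im < 0) => by simp at hz'; linarith

variable {f : ℂ → E}

theorem integrable_of_integrable_norm_sq_smul_comp_sq
    (h : Integrable (fun x => ‖x‖ ^ 2 • f (x ^ 2)) μ) : Integrable f μ :=
  (integrableOn_norm_sq_smul_comp_sq_iff (measurableSet_lt measurable_const measurable_im)
    neg_notMem_setOf_im_pos (ae_mem_sq_image_setOf_im_pos μ) f).mp h.integrableOn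

theorem integral_norm_sq_smul_comp_sq (h : Integrable (fun x => ‖x‖ ^ 2 • f (x ^ 2)) μ) :
    ∫ x, ‖x‖ ^ 2 • f (x ^ 2) ∂μ = (1 / 2 : ℝ) • ∫ y, f y ∂μ := by
  rw [integral_eq_setIntegral_im_pos_add_setIntegral_im_neg h,
    setIntegral_norm_sq_smul_comp_sq (measurableSet_lt measurable_const measurable_im)
      neg_notMem_setOf_im_pos (ae_mem_sq_image_setOf_im_pos μ),
    setIntegral_norm_sq_smul_comp_sq (measurableSet_lt measurable_im measurable_const)
      neg_notMem_setOf_im_neg (ae_mem_sq_image_setOf_im_neg μ), ← add_smul]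
  norm_num

end Complex

theorem stmt_12_general (f : ℂ → ℝ)
    (hint : Integrable (fun x : ℂ => ‖x‖ ^ 2 * f (x ^ 2))) :
    Integrable f ∧ (∫ x : ℂ, ‖x‖ ^ 2 * f (x ^ 2)) = (1 / 2) * ∫ y : ℂ, f y :=
  ⟨Complex.integrable_of_integrable_norm_sq_smul_comp_sq hint,
    Complex.integral_norm_sq_smul_comp_sq hint⟩

/-- change of variables `y = x²` (complex square):
`∫_{ℝ²} |x|² f(x²) dx = (1/2) ∫_{ℝ²} f(y) dy`. -/
theorem stmt_12 (f : ℂ → ℝ) (hf : Measurable f)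
    (hint : Integrable (fun x : ℂ => ‖x‖ ^ 2 * f (x ^ 2))) :
    Integrable f ∧ (∫ x : ℂ, ‖x‖ ^ 2 * f (x ^ 2)) = (1 / 2) * ∫ y : ℂ, f y :=
  stmt_12_general f hint
end

section
/- Define the vector field 𝓕(ξ) = ( ∫_{ℝ²} |x−ξ| x₁ (1+|x|²)^{−3} dx , ∫_{ℝ²} |x−ξ| x₂ (1+|x|²)^{−3} dx ) for ξ∈ℝ². Then 𝓕 is of class C¹ on ℝ², and at every point of the form (ξ₁,0) with ξ₁∈ℝ the Jacobian matrix D𝓕(ξ₁,0) is diagonal (the mixed partial derivatives ∂_{ξ₂}𝓕₁(ξ₁,0) and ∂_{ξ₁}𝓕₂(ξ₁,0) vanish), the diagonal entry ∂_{ξ₂}𝓕₂(ξ₁,0) = −∫_{ℝ²} x₂²/( |x−(ξ₁,0)| (1+|x|²)³ ) dx is strictly negative, and det D𝓕(ξ₁,0) > 0; in particular D𝓕 is non-degenerate at every point (ξ₁,0). -/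
open MeasureTheory Filter Real Set

noncomputable section

/-- First component of the vector field `𝓕`. -/
def F1 (ξ : ℂ) : ℝ := ∫ x : ℂ, ‖x - ξ‖ * x.re * (1 / (1 + ‖x‖ ^ 2) ^ 3)

/-- Second component of the vector field `𝓕`. -/
def F2 (ξ : ℂ) : ℝ := ∫ x : ℂ, ‖x - ξ‖ * x.im * (1 / (1 + ‖x‖ ^ 2) ^ 3)

/-!
Writing `w(x) = (1 + |x|²)⁻³`, each component of `𝓕` is `ξ ↦ ∫ |x - ξ| φ(x) w(x) dx` with
`|φ(x)| ≤ |x|`. Since `ξ ↦ |x - ξ|` is 1-Lipschitz with gradient `(ξ - x)/|ξ - x|` off `ξ = x`, and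
`(1 + |x|²) w(x)` is integrable on the plane, one may differentiate under the integral sign, and
dominated convergence makes the derivative continuous.

At `ξ = (t, 0)` the reflection `x ↦ x̄` turns both mixed partials into integrals of odd functions,
and `∂₂𝓕₂` is minus an integral of a positive function. For `∂₁𝓕₁` one symmetrizes under
`x ↦ -x̄`: the integrand becomes `x₁ (ψ(t - x₁) - ψ(t + x₁)) w(x)` with `ψ(u) = u / √(u² + x₂²)`
strictly increasing, which is negative whenever `x₁ x₂ ≠ 0`. So the Jacobian is diagonal with two
negative entries.
-/

section NormDerivative

variable {E : Type*} [NormedAddCommGroup E] [InnerProductSpace ℝ E]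

theorem hasFDerivAt_norm_of_ne_zero {v : E} (hv : v ≠ 0) :
    HasFDerivAt (‖·‖) (‖v‖⁻¹ • innerSL ℝ v) v := by
  have hsqrt := ((hasStrictFDerivAt_norm_sq v).hasFDerivAt.sqrt (by positivity))
  simp only [Real.sqrt_sq (norm_nonneg _)] at hsqrt
  convert hsqrt using 1
  ext w
  simp only [FunLike.coe_smul, Pi.smul_apply, innerSL_apply_apply, smul_eq_mul, two_smul,
    FunLike.coe_add, Pi.add_apply]
  field_simp
  ring

theorem hasFDerivAt_norm_sub_left {x ξ : E} (h : ξ ≠ x) :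
    HasFDerivAt (fun η => ‖x - η‖) (‖ξ - x‖⁻¹ • innerSL ℝ (ξ - x)) ξ := by
  simp_rw [norm_sub_rev x]
  exact (hasFDerivAt_norm_of_ne_zero (sub_ne_zero.2 h)).comp ξ ((hasFDerivAt_id ξ).sub_const x)

theorem norm_inv_norm_smul_innerSL_le (v : E) : ‖‖v‖⁻¹ • innerSL ℝ v‖ ≤ 1 := by
  rw [norm_smul, innerSL_apply_norm, norm_inv, norm_norm]
  exact inv_mul_le_one_of_le₀ le_rfl (norm_nonneg _)

theorem norm_smul_gradient_norm_sub_le (g : E → ℝ) (ξ x : E) :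
    ‖g x • (‖ξ - x‖⁻¹ • innerSL ℝ (ξ - x))‖ ≤ ‖g x‖ := by
  rw [norm_smul]
  exact mul_le_of_le_one_right (norm_nonneg _) (norm_inv_norm_smul_innerSL_le _)

end NormDerivative

section DistancePotential

variable {E : Type*} [NormedAddCommGroup E] [MeasurableSpace E] {μ : Measure E} {g : E → ℝ}

theorem integrable_norm_sub_mul [OpensMeasurableSpace E] (hg : Integrable g μ)
    (hg' : Integrable (fun x => ‖x‖ * g x) μ) (ξ : E) :
    Integrable (fun x => ‖x - ξ‖ * g x) μ := by
  refine (hg'.norm.add (hg.norm.const_mul ‖ξ‖)).mono'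
    ((continuous_id.sub continuous_const).norm.aestronglyMeasurable.mul hg.aestronglyMeasurable)
    (Eventually.of_forall fun x => ?_)
  simp only [norm_mul, norm_norm, Pi.add_apply]
  nlinarith [norm_sub_le x ξ, norm_nonneg (g x)]

variable [InnerProductSpace ℝ E] [BorelSpace E] [SecondCountableTopology E]

theorem aestronglyMeasurable_smul_gradient_norm_sub (hg : AEStronglyMeasurable g μ) (ξ : E) :
    AEStronglyMeasurable (fun x => g x • (‖ξ - x‖⁻¹ • innerSL ℝ (ξ - x))) μ :=
  hg.smul ((continuous_const.sub continuous_id).norm.measurable.inv.aestronglyMeasurable.smul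
    ((innerSL ℝ).continuous.comp_aestronglyMeasurable
      (aestronglyMeasurable_const.sub aestronglyMeasurable_id)))

theorem integrable_smul_gradient_norm_sub (hg : Integrable g μ) (ξ : E) :
    Integrable (fun x => g x • (‖ξ - x‖⁻¹ • innerSL ℝ (ξ - x))) μ :=
  hg.norm.mono' (aestronglyMeasurable_smul_gradient_norm_sub hg.aestronglyMeasurable ξ)
    (Eventually.of_forall (norm_smul_gradient_norm_sub_le g ξ))

theorem hasFDerivAt_integral_norm_sub_mul [NullSingletonClass μ] (hg : Integrable g μ)
    (hg' : Integrable (fun x => ‖x‖ * g x) μ) (ξ₀ : E) :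
    HasFDerivAt (fun ξ => ∫ x, ‖x - ξ‖ * g x ∂μ)
      (∫ x, g x • (‖ξ₀ - x‖⁻¹ • innerSL ℝ (ξ₀ - x)) ∂μ) ξ₀ := by
  refine (hasFDerivAt_integral_of_dominated_loc_of_lip (Metric.ball_mem_nhds ξ₀ one_pos)
    (Eventually.of_forall fun ξ => (integrable_norm_sub_mul hg hg' ξ).1)
    (integrable_norm_sub_mul hg hg' ξ₀)
    (aestronglyMeasurable_smul_gradient_norm_sub hg.aestronglyMeasurable ξ₀)
    (Eventually.of_forall fun x => ?_) hg.norm ?_).2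
  · refine (LipschitzWith.of_dist_le_mul fun ξ η => ?_).lipschitzOnWith
    rw [Real.dist_eq, ← sub_mul, abs_mul, Real.coe_nnabs, abs_norm, Real.norm_eq_abs, mul_comm]
    gcongr
    simpa only [norm_sub_rev x, dist_eq_norm, sub_sub_sub_cancel_right] using
      abs_norm_sub_norm_le (ξ - x) (η - x)
  · filter_upwards [compl_mem_ae_iff.2 (measure_singleton ξ₀)] with x hx
    exact (hasFDerivAt_norm_sub_left (Ne.symm hx)).mul_const (g x)

theorem contDiff_integral_norm_sub_mul [NullSingletonClass μ] (hg : Integrable g μ)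
    (hg' : Integrable (fun x => ‖x‖ * g x) μ) :
    ContDiff ℝ 1 (fun ξ => ∫ x, ‖x - ξ‖ * g x ∂μ) := by
  have hderiv := hasFDerivAt_integral_norm_sub_mul hg hg'
  refine contDiff_one_iff_fderiv.2 ⟨fun ξ => (hderiv ξ).differentiableAt, ?_⟩
  rw [funext fun ξ => (hderiv ξ).fderiv]
  refine continuous_iff_continuousAt.2 fun ξ₀ => continuousAt_of_dominated
    (Eventually.of_forall
      (aestronglyMeasurable_smul_gradient_norm_sub hg.aestronglyMeasurable))
    (Eventually.of_forall fun ξ => Eventually.of_forall (norm_smul_gradient_norm_sub_le g ξ))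
    hg.norm ?_
  filter_upwards [compl_mem_ae_iff.2 (measure_singleton ξ₀)] with x hx
  have hne : ‖ξ₀ - x‖ ≠ 0 := norm_ne_zero_iff.2 (sub_ne_zero.2 (Ne.symm hx))
  fun_prop (disch := exact hne)

theorem integrable_mul_inner_gradient_norm_sub (hg : Integrable g μ) (ξ v : E) :
    Integrable (fun x => g x * (‖ξ - x‖⁻¹ * inner ℝ (ξ - x) v)) μ := by
  simpa [inner_sub_left] using (integrable_smul_gradient_norm_sub hg ξ).apply_continuousLinearMap v

theorem fderiv_integral_norm_sub_mul_apply [NullSingletonClass μ] (hg : Integrable g μ)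
    (hg' : Integrable (fun x => ‖x‖ * g x) μ) (ξ v : E) :
    fderiv ℝ (fun ξ => ∫ x, ‖x - ξ‖ * g x ∂μ) ξ v =
      ∫ x, g x * (‖ξ - x‖⁻¹ * inner ℝ (ξ - x) v) ∂μ := by
  rw [(hasFDerivAt_integral_norm_sub_mul hg hg' ξ).fderiv,
    ContinuousLinearMap.integral_apply (integrable_smul_gradient_norm_sub hg ξ)]
  simp [inner_sub_left]

end DistancePotential

section Weight

variable {E : Type*} [NormedAddCommGroup E] [NormedSpace ℝ E] [FiniteDimensional ℝ E]
  [MeasurableSpace E] [BorelSpace E] {μ : Measure E} [μ.IsAddHaarMeasure]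

theorem integrable_mul_one_div_one_add_norm_sq_pow_three (hE : Module.finrank ℝ E < 4)
    {h : E → ℝ} (hh : AEStronglyMeasurable h μ) (hle : ∀ x, |h x| ≤ 1 + ‖x‖ ^ 2) :
    Integrable (fun x => h x * (1 / (1 + ‖x‖ ^ 2) ^ 3)) μ := by
  refine (integrable_rpow_neg_one_add_norm_sq (μ := μ) (r := 4) (by exact_mod_cast hE)).mono'
    (hh.mul (by fun_prop : Measurable fun x : E => 1 / (1 + ‖x‖ ^ 2) ^ 3).aestronglyMeasurable)
    (Eventually.of_forall fun x => ?_)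
  rw [show -(4 : ℝ) / 2 = ((-2 : ℤ) : ℝ) by norm_num, Real.rpow_intCast, zpow_neg, norm_mul,
    Real.norm_eq_abs, Real.norm_of_nonneg (by positivity)]
  calc |h x| * (1 / (1 + ‖x‖ ^ 2) ^ 3) ≤ (1 + ‖x‖ ^ 2) * (1 / (1 + ‖x‖ ^ 2) ^ 3) := by
        gcongr; exact hle x
    _ = ((1 + ‖x‖ ^ 2) ^ (2 : ℤ))⁻¹ := by field_simp

end Weight

section Symmetrization

variable {E : Type*} [NormedAddCommGroup E] [InnerProductSpace ℝ E] [FiniteDimensional ℝ E]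
  [MeasurableSpace E] [BorelSpace E] (σ : E ≃ₗᵢ[ℝ] E) {f : E → ℝ}

theorem integral_eq_zero_of_comp_linearIsometryEquiv_eq_neg (hf : ∀ x, f (σ x) = -f x) :
    ∫ x, f x = 0 := by
  have h := integral_comp σ f
  simp only [hf, integral_neg] at h
  linarith

theorem integral_neg_of_add_comp_linearIsometryEquiv (hf : Integrable f)
    (hle : ∀ᵐ x, f x + f (σ x) ≤ 0) {s : Set E} (hs : 0 < volume s)
    (hlt : ∀ x ∈ s, f x + f (σ x) < 0) : ∫ x, f x < 0 := by
  have hfσ : Integrable fun x => f (σ x) := (integrable_comp σ f).2 hf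
  have hpos : 0 < ∫ x, -(f x + f (σ x)) := by
    refine (integral_pos_iff_support_of_nonneg_ae ?_ (hf.add hfσ).neg).2
      (hs.trans_le (measure_mono fun x hx => ?_))
    · filter_upwards [hle] with x hx using neg_nonneg.2 hx
    · exact neg_ne_zero.2 (hlt x hx).ne
  rw [integral_neg, integral_add hf hfσ, integral_comp σ f] at hpos
  linarith

end Symmetrization

theorem strictMono_div_sqrt_sq_add {c : ℝ} (hc : 0 < c) :
    StrictMono fun u : ℝ => u / √(u ^ 2 + c) := by
  refine strictMono_of_odd_strictMonoOn_nonneg (fun u => by simp only [neg_sq, neg_div])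
    fun u (hu : 0 ≤ u) v (hv : 0 ≤ v) huv => ?_
  have hsu : √(u ^ 2 + c) ^ 2 = u ^ 2 + c := Real.sq_sqrt (by positivity)
  have hsv : √(v ^ 2 + c) ^ 2 = v ^ 2 + c := Real.sq_sqrt (by positivity)
  rw [div_lt_div_iff₀ (by positivity) (by positivity)]
  refine lt_of_pow_lt_pow_left₀ 2 (by positivity) ?_
  rw [mul_pow, mul_pow, hsu, hsv]
  nlinarith [mul_lt_mul_of_pos_right (pow_lt_pow_left₀ huv hu two_ne_zero) hc]

theorem mul_sub_neg_of_strictMono {ψ : ℝ → ℝ} (hψ : StrictMono ψ) {a : ℝ} (ha : a ≠ 0) (s : ℝ) :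
    a * (ψ (s - a) - ψ (s + a)) < 0 := by
  rcases ha.lt_or_gt with ha | ha
  · exact mul_neg_of_neg_of_pos ha (sub_pos.2 (hψ (by linarith)))
  · exact mul_neg_of_pos_of_neg ha (sub_neg.2 (hψ (by linarith)))

theorem mul_sub_nonpos_of_monotone {ψ : ℝ → ℝ} (hψ : Monotone ψ) (a s : ℝ) :
    a * (ψ (s - a) - ψ (s + a)) ≤ 0 := by
  rcases le_total a 0 with ha | ha
  · exact mul_nonpos_of_nonpos_of_nonneg ha (sub_nonneg.2 (hψ (by linarith)))
  · exact mul_nonpos_of_nonneg_of_nonpos ha (sub_nonpos.2 (hψ (by linarith)))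

theorem volume_setOf_im_eq_zero : volume {x : ℂ | x.im = 0} = 0 := by
  have h : {x : ℂ | x.im = 0} = (LinearMap.ker Complex.imLm : Submodule ℝ ℂ) := by
    ext z
    simp [LinearMap.mem_ker, Complex.imLm]
  rw [h]
  refine Measure.addHaar_submodule _ _ fun htop => ?_
  have := Submodule.eq_top_iff'.1 htop Complex.I
  simp [LinearMap.mem_ker, Complex.imLm] at this

section Field

def weightedPotential (φ : ℂ → ℝ) (ξ : ℂ) : ℝ :=
  ∫ x : ℂ, ‖x - ξ‖ * (φ x * (1 / (1 + ‖x‖ ^ 2) ^ 3))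

theorem F1_eq_weightedPotential : F1 = weightedPotential Complex.re := by
  funext ξ
  simp only [F1, weightedPotential, mul_assoc]

theorem F2_eq_weightedPotential : F2 = weightedPotential Complex.im := by
  funext ξ
  simp only [F2, weightedPotential, mul_assoc]

variable {φ : ℂ → ℝ} (hφ : Continuous φ) (hle : ∀ x, |φ x| ≤ ‖x‖)
include hφ hle

theorem integrable_mul_weight : Integrable (fun x : ℂ => φ x * (1 / (1 + ‖x‖ ^ 2) ^ 3)) :=
  integrable_mul_one_div_one_add_norm_sq_pow_three (by simp) hφ.aestronglyMeasurable
    fun x => (hle x).trans (by nlinarith [sq_nonneg (‖x‖ - 1)])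

theorem integrable_norm_mul_mul_weight :
    Integrable (fun x : ℂ => ‖x‖ * (φ x * (1 / (1 + ‖x‖ ^ 2) ^ 3))) := by
  simp_rw [← mul_assoc]
  refine integrable_mul_one_div_one_add_norm_sq_pow_three (by simp)
    (continuous_norm.mul hφ).aestronglyMeasurable fun x => ?_
  rw [abs_mul, abs_norm]
  nlinarith [hle x, norm_nonneg x, abs_nonneg (φ x)]

theorem contDiff_weightedPotential : ContDiff ℝ 1 (weightedPotential φ) :=
  contDiff_integral_norm_sub_mul (integrable_mul_weight hφ hle)
    (integrable_norm_mul_mul_weight hφ hle)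

theorem fderiv_weightedPotential_apply (ξ v : ℂ) :
    fderiv ℝ (weightedPotential φ) ξ v =
      ∫ x : ℂ, φ x * (1 / (1 + ‖x‖ ^ 2) ^ 3) * (‖ξ - x‖⁻¹ * inner ℝ (ξ - x) v) :=
  fderiv_integral_norm_sub_mul_apply (integrable_mul_weight hφ hle)
    (integrable_norm_mul_mul_weight hφ hle) ξ v

theorem integrable_mul_weight_mul_inner (ξ v : ℂ) :
    Integrable fun x : ℂ => φ x * (1 / (1 + ‖x‖ ^ 2) ^ 3) * (‖ξ - x‖⁻¹ * inner ℝ (ξ - x) v) :=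
  integrable_mul_inner_gradient_norm_sub (integrable_mul_weight hφ hle) ξ v

end Field

section RealAxis

theorem norm_ofReal_sub_conj (t : ℝ) (x : ℂ) : ‖(t : ℂ) - (starRingEnd ℂ) x‖ = ‖(t : ℂ) - x‖ := by
  rw [← Complex.norm_conj, map_sub, Complex.conj_ofReal, Complex.conj_conj]

theorem fderiv_F1_apply_I (t : ℝ) : fderiv ℝ F1 (t : ℂ) Complex.I = 0 := by
  rw [F1_eq_weightedPotential,
    fderiv_weightedPotential_apply Complex.continuous_re Complex.abs_re_le_norm]
  refine integral_eq_zero_of_comp_linearIsometryEquiv_eq_neg Complex.conjLIE fun x => ?_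
  simp [Complex.inner, norm_ofReal_sub_conj]

theorem fderiv_F2_apply_one (t : ℝ) : fderiv ℝ F2 (t : ℂ) 1 = 0 := by
  rw [F2_eq_weightedPotential,
    fderiv_weightedPotential_apply Complex.continuous_im Complex.abs_im_le_norm]
  refine integral_eq_zero_of_comp_linearIsometryEquiv_eq_neg Complex.conjLIE fun x => ?_
  simp [Complex.inner, norm_ofReal_sub_conj]

theorem im_mul_weight_mul_inner_I (t : ℝ) (x : ℂ) :
    x.im * (1 / (1 + ‖x‖ ^ 2) ^ 3) * (‖(t : ℂ) - x‖⁻¹ * inner ℝ ((t : ℂ) - x) Complex.I) =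
      -(x.im ^ 2 / (‖x - (t : ℂ)‖ * (1 + ‖x‖ ^ 2) ^ 3)) := by
  simp [Complex.inner, norm_sub_rev (t : ℂ)]
  field_simp

theorem fderiv_F2_apply_I (t : ℝ) : fderiv ℝ F2 (t : ℂ) Complex.I =
    -∫ x : ℂ, x.im ^ 2 / (‖x - (t : ℂ)‖ * (1 + ‖x‖ ^ 2) ^ 3) := by
  rw [F2_eq_weightedPotential,
    fderiv_weightedPotential_apply Complex.continuous_im Complex.abs_im_le_norm, ← integral_neg]
  simp only [im_mul_weight_mul_inner_I]

theorem integral_im_sq_div_pos (t : ℝ) :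
    0 < ∫ x : ℂ, x.im ^ 2 / (‖x - (t : ℂ)‖ * (1 + ‖x‖ ^ 2) ^ 3) := by
  have hint : Integrable fun x : ℂ => x.im ^ 2 / (‖x - (t : ℂ)‖ * (1 + ‖x‖ ^ 2) ^ 3) := by
    refine (integrable_mul_weight_mul_inner Complex.continuous_im Complex.abs_im_le_norm
      (t : ℂ) Complex.I).neg.congr (Eventually.of_forall fun x => ?_)
    simp only [Pi.neg_apply, im_mul_weight_mul_inner_I, neg_neg]
  refine (integral_pos_iff_support_of_nonneg (fun x => by positivity) hint).2
    (((isOpen_lt continuous_const Complex.continuous_im).measure_pos volume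
      ⟨Complex.I, by simp⟩).trans_le (measure_mono fun x (hx : 0 < x.im) => ?_))
  have hxt : x - (t : ℂ) ≠ 0 := sub_ne_zero.2 fun h => by simp [h] at hx
  exact (div_pos (by positivity) (mul_pos (norm_pos_iff.2 hxt) (by positivity))).ne'

theorem norm_ofReal_sub (t : ℝ) (x : ℂ) : ‖(t : ℂ) - x‖ = √((t - x.re) ^ 2 + x.im ^ 2) := by
  simp [Complex.norm_def, Complex.normSq_apply]
  ring_nf

theorem fderiv_F1_apply_one_neg (t : ℝ) : fderiv ℝ F1 (t : ℂ) 1 < 0 := by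
  rw [F1_eq_weightedPotential,
    fderiv_weightedPotential_apply Complex.continuous_re Complex.abs_re_le_norm]
  set w : ℂ → ℝ := fun x => 1 / (1 + ‖x‖ ^ 2) ^ 3 with hw
  set q : ℂ → ℝ := fun x => x.re * w x * (‖(t : ℂ) - x‖⁻¹ * inner ℝ ((t : ℂ) - x) 1) with hq
  let σ : ℂ ≃ₗᵢ[ℝ] ℂ := Complex.conjLIE.trans (LinearIsometryEquiv.neg ℝ)
  have hsym : ∀ x : ℂ, q x + q (σ x) =
      x.re * ((t - x.re) / √((t - x.re) ^ 2 + x.im ^ 2)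
        - (t + x.re) / √((t + x.re) ^ 2 + x.im ^ 2)) * w x := by
    intro x
    have hσ : σ x = -(starRingEnd ℂ) x := rfl
    simp only [hq, hw, norm_ofReal_sub, hσ, Complex.neg_re, Complex.neg_im, Complex.conj_re,
      Complex.conj_im, neg_neg, norm_neg, Complex.norm_conj, Complex.inner, one_mul, map_sub,
      Complex.conj_ofReal, Complex.sub_re, Complex.ofReal_re, sub_neg_eq_add]
    ring
  have hψ : ∀ x : ℂ, x.im ≠ 0 → StrictMono fun u : ℝ => u / √(u ^ 2 + x.im ^ 2) :=
    fun x hx => strictMono_div_sqrt_sq_add (by positivity)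
  refine integral_neg_of_add_comp_linearIsometryEquiv σ
    (integrable_mul_weight_mul_inner Complex.continuous_re Complex.abs_re_le_norm _ _) ?_
    (s := {x | 0 < x.re ∧ 0 < x.im}) ?_ ?_
  · filter_upwards [compl_mem_ae_iff.2 volume_setOf_im_eq_zero] with x hx
    exact (hsym x).le.trans (mul_nonpos_of_nonpos_of_nonneg
      (mul_sub_nonpos_of_monotone (hψ x hx).monotone _ _) (by positivity))
  · exact ((isOpen_lt continuous_const Complex.continuous_re).inter
      (isOpen_lt continuous_const Complex.continuous_im)).measure_pos volume
        ⟨1 + Complex.I, by simp⟩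
  · rintro x ⟨hre, him⟩
    exact (hsym x).trans_lt (mul_neg_of_neg_of_pos
      (mul_sub_neg_of_strictMono (hψ x him.ne') hre.ne' _) (by positivity))

end RealAxis

/-- `𝓕 = (F₁, F₂)` is `C¹` and its Jacobian at points `(ξ₁, 0)`
is diagonal, with `∂_{ξ₂}𝓕₂(ξ₁,0) < 0` given by the stated integral, and
positive determinant; in particular it is non-degenerate there. -/
theorem stmt_15 :
    ContDiff ℝ 1 (fun ξ : ℂ => (F1 ξ, F2 ξ)) ∧
    ∀ t : ℝ,
      fderiv ℝ F1 (t : ℂ) Complex.I = 0 ∧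
      fderiv ℝ F2 (t : ℂ) 1 = 0 ∧
      fderiv ℝ F2 (t : ℂ) Complex.I =
        -∫ x : ℂ, x.im ^ 2 / (‖x - (t : ℂ)‖ * (1 + ‖x‖ ^ 2) ^ 3) ∧
      fderiv ℝ F2 (t : ℂ) Complex.I < 0 ∧
      0 < fderiv ℝ F1 (t : ℂ) 1 * fderiv ℝ F2 (t : ℂ) Complex.I -
          fderiv ℝ F1 (t : ℂ) Complex.I * fderiv ℝ F2 (t : ℂ) 1 := by
  refine ⟨?_, fun t => ?_⟩
  · rw [F1_eq_weightedPotential, F2_eq_weightedPotential]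
    exact (contDiff_weightedPotential Complex.continuous_re Complex.abs_re_le_norm).prodMk
      (contDiff_weightedPotential Complex.continuous_im Complex.abs_im_le_norm)
  have h22 : fderiv ℝ F2 (t : ℂ) Complex.I < 0 := by
    rw [fderiv_F2_apply_I]
    exact neg_neg_of_pos (integral_im_sq_div_pos t)
  refine ⟨fderiv_F1_apply_I t, fderiv_F2_apply_one t, fderiv_F2_apply_I t, h22, ?_⟩
  rw [fderiv_F1_apply_I, fderiv_F2_apply_one, mul_zero, sub_zero]
  exact mul_pos_of_neg_of_neg (fderiv_F1_apply_one_neg t) h22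
end
end

section
/- For λ>0 and b∈ℂ let e^{W_{λ,b}(x)} = λ/(λ/32 + |x²−b|²)². Then for every s∈{0,1,2,3}, every p≥1 and every M>0 there exists C>0 such that for all λ∈(0,1] and all b∈ℂ with |b|≤M√λ one has ( ∫_{B₁} |x|^{(2+s)p} e^{p W_{λ,b}(x)} dx )^{1/p} ≤ C λ^{s/4} λ^{−(p−1)/(2p)}. -/
open MeasureTheory Filter Real Set

noncomputable section

/-- The open unit ball in `ℝ² ≅ ℂ` centered at the origin. -/
def B1 : Set ℂ := Metric.ball 0 1

/-!
Since `‖b‖ ≤ M √λ`, one has `(√λ + |x|²)² ≤ 128 (1 + M²) (λ/32 + |x² - b|²)`, so on all of `ℂ`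
the integrand is dominated by a constant times `λ^p (√λ + |x|²)^{(s-6)p/2}`. This majorant is
integrable because `(6 - s) p > 2`, and the substitution `x = λ^{1/4} y` shows that its integral
is a fixed multiple of `λ^{sp/4 - (p-1)/2}`.
-/

open Module

lemma rpow_add_norm_sq_eq {E : Type*} [NormedAddCommGroup E] [NormedSpace ℝ E] {a : ℝ}
    (ha : 0 < a) (q : ℝ) (x : E) :
    (a + ‖x‖ ^ 2) ^ q = a ^ q * (1 + ‖(√a)⁻¹ • x‖ ^ 2) ^ q := by
  have hsa : 0 < √a := sqrt_pos.2 ha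
  rw [← mul_rpow ha.le (by positivity), norm_smul, norm_inv, norm_of_nonneg hsa.le, mul_pow,
    inv_pow, sq_sqrt ha.le, mul_add, mul_one, mul_inv_cancel_left₀ ha.ne']

section Scaling

variable {E : Type*} [NormedAddCommGroup E] [NormedSpace ℝ E] [FiniteDimensional ℝ E]
  [MeasurableSpace E] [BorelSpace E] (μ : Measure E) [μ.IsAddHaarMeasure]

lemma integrable_rpow_add_norm_sq {a q : ℝ} (ha : 0 < a) (hq : q < -(finrank ℝ E : ℝ) / 2) :
    Integrable (fun x : E ↦ (a + ‖x‖ ^ 2) ^ q) μ := by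
  have h := (integrable_rpow_neg_one_add_norm_sq (μ := μ) (r := -2 * q) (by linarith)).comp_smul
    (inv_ne_zero (sqrt_pos.2 ha).ne')
  simp only [show -(-2 * q) / 2 = q by ring] at h
  simpa only [rpow_add_norm_sq_eq ha] using h.const_mul (a ^ q)

lemma integral_rpow_add_norm_sq {a : ℝ} (ha : 0 < a) (q : ℝ) :
    ∫ x, (a + ‖x‖ ^ 2) ^ q ∂μ = a ^ (q + finrank ℝ E / 2) * ∫ x, (1 + ‖x‖ ^ 2) ^ q ∂μ := by
  rw [integral_congr_ae (Eventually.of_forall (rpow_add_norm_sq_eq ha q)), integral_const_mul,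
    Measure.integral_comp_inv_smul μ (fun y : E ↦ (1 + ‖y‖ ^ 2) ^ q) √a, smul_eq_mul,
    abs_of_pos (by positivity), ← mul_assoc, rpow_add ha, sqrt_eq_rpow, ← rpow_natCast,
    ← rpow_mul ha.le]
  ring_nf

end Scaling

-- `bubble lam b` is the function `e^{W_{λ,b}}`.
def bubble (lam : ℝ) (b x : ℂ) : ℝ := lam / (lam / 32 + ‖x ^ 2 - b‖ ^ 2) ^ 2

section Bubble

variable {lam M : ℝ} {b : ℂ}

lemma sqrt_add_norm_sq_sq_le (hlam : 0 ≤ lam) (hb : ‖b‖ ≤ M * √lam) (x : ℂ) :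
    (√lam + ‖x‖ ^ 2) ^ 2 ≤ 128 * (1 + M ^ 2) * (lam / 32 + ‖x ^ 2 - b‖ ^ 2) := by
  have hb2 : ‖b‖ ^ 2 ≤ M ^ 2 * lam := by
    calc ‖b‖ ^ 2 ≤ (M * √lam) ^ 2 := pow_le_pow_left₀ (norm_nonneg b) hb 2
      _ = M ^ 2 * lam := by rw [mul_pow, sq_sqrt hlam]
  have hx2 : ‖x‖ ^ 2 ≤ ‖x ^ 2 - b‖ + ‖b‖ := by
    rw [← norm_pow]; exact norm_le_norm_sub_add (x ^ 2) b
  have hsq := sq_sqrt hlam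
  nlinarith [sq_nonneg (√lam - ‖x‖ ^ 2), sq_nonneg (‖x ^ 2 - b‖ - ‖b‖), norm_nonneg b,
    norm_nonneg (x ^ 2 - b), sq_nonneg M]

lemma bubble_le (hlam : 0 < lam) (hb : ‖b‖ ≤ M * √lam) (x : ℂ) :
    bubble lam b x ≤ (128 * (1 + M ^ 2)) ^ 2 * lam / (√lam + ‖x‖ ^ 2) ^ 4 := by
  rw [bubble, div_le_div_iff₀ (by positivity) (by positivity)]
  calc lam * (√lam + ‖x‖ ^ 2) ^ 4 = lam * ((√lam + ‖x‖ ^ 2) ^ 2) ^ 2 := by ring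
    _ ≤ lam * (128 * (1 + M ^ 2) * (lam / 32 + ‖x ^ 2 - b‖ ^ 2)) ^ 2 := by
        gcongr; exact sqrt_add_norm_sq_sq_le hlam.le hb x
    _ = _ := by ring

lemma norm_rpow_mul_bubble_rpow_le {e p : ℝ} (he : 0 ≤ e) (hp : 0 ≤ p) (hlam : 0 < lam)
    (hb : ‖b‖ ≤ M * √lam) (x : ℂ) :
    ‖x‖ ^ e * bubble lam b x ^ p ≤
      (128 * (1 + M ^ 2)) ^ (2 * p) * lam ^ p * (√lam + ‖x‖ ^ 2) ^ (e / 2 - 4 * p) := by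
  have hpos : 0 < √lam + ‖x‖ ^ 2 := by positivity
  have hnorm : ‖x‖ ^ e ≤ (√lam + ‖x‖ ^ 2) ^ (e / 2) := by
    calc ‖x‖ ^ e = (‖x‖ ^ 2) ^ (e / 2) := by
          rw [← rpow_natCast_mul (norm_nonneg x)]; push_cast; ring_nf
      _ ≤ _ := by gcongr; linarith [sqrt_nonneg lam]
  have hbub : bubble lam b x ^ p ≤
      (128 * (1 + M ^ 2)) ^ (2 * p) * lam ^ p * (√lam + ‖x‖ ^ 2) ^ (-4 * p) := by
    calc bubble lam b x ^ p ≤ ((128 * (1 + M ^ 2)) ^ 2 * lam / (√lam + ‖x‖ ^ 2) ^ 4) ^ p :=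
          rpow_le_rpow (by unfold bubble; positivity) (bubble_le hlam hb x) hp
      _ = _ := by
          rw [div_rpow (by positivity) (by positivity), mul_rpow (by positivity) hlam.le,
            ← rpow_natCast_mul (by positivity), ← rpow_natCast_mul hpos.le, neg_mul,
            rpow_neg hpos.le, div_eq_mul_inv]
          push_cast; rfl
  calc ‖x‖ ^ e * bubble lam b x ^ p
      ≤ (√lam + ‖x‖ ^ 2) ^ (e / 2) *
          ((128 * (1 + M ^ 2)) ^ (2 * p) * lam ^ p * (√lam + ‖x‖ ^ 2) ^ (-4 * p)) :=
        mul_le_mul hnorm hbub (by unfold bubble; positivity) (by positivity)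
    _ = _ := by rw [sub_eq_add_neg, rpow_add hpos, neg_mul]; ring

theorem setIntegral_norm_rpow_mul_bubble_rpow_le (S : Set ℂ) {e p : ℝ} (he : 0 ≤ e)
    (hp : 0 ≤ p) (hep : e + 2 < 8 * p) (hlam : 0 < lam) (hb : ‖b‖ ≤ M * √lam) :
    ∫ x in S, ‖x‖ ^ e * bubble lam b x ^ p ≤
      (128 * (1 + M ^ 2)) ^ (2 * p) * (∫ x : ℂ, (1 + ‖x‖ ^ 2) ^ (e / 2 - 4 * p)) *
        lam ^ (e / 4 - p + 1 / 2) := by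
  have hG : Integrable (fun x : ℂ ↦ (√lam + ‖x‖ ^ 2) ^ (e / 2 - 4 * p)) :=
    integrable_rpow_add_norm_sq _ (sqrt_pos.2 hlam)
      (by rw [Complex.finrank_real_complex]; linarith)
  calc ∫ x in S, ‖x‖ ^ e * bubble lam b x ^ p
      ≤ ∫ x in S, (128 * (1 + M ^ 2)) ^ (2 * p) * lam ^ p * (√lam + ‖x‖ ^ 2) ^ (e / 2 - 4 * p) :=
        integral_mono_of_nonneg (Eventually.of_forall fun x ↦ by unfold bubble; positivity)
          (hG.const_mul _).integrableOn
          (Eventually.of_forall (norm_rpow_mul_bubble_rpow_le he hp hlam hb))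
    _ ≤ ∫ x, (128 * (1 + M ^ 2)) ^ (2 * p) * lam ^ p * (√lam + ‖x‖ ^ 2) ^ (e / 2 - 4 * p) :=
        setIntegral_le_integral (hG.const_mul _) (Eventually.of_forall fun x ↦ by positivity)
    _ = _ := by
        rw [integral_const_mul, integral_rpow_add_norm_sq _ (sqrt_pos.2 hlam),
          Complex.finrank_real_complex, sqrt_eq_rpow, ← rpow_mul hlam.le]
        have hexp : e / 4 - p + 1 / 2 = p + 1 / 2 * (e / 2 - 4 * p + (2 : ℕ) / 2) := by
          push_cast; ring
        rw [hexp, rpow_add hlam]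
        ring

end Bubble

theorem stmt_17_general (s : ℕ) (hs : s ≤ 3) (p : ℝ) (hp : 1 ≤ p) (M : ℝ) :
    ∃ C : ℝ, 0 < C ∧ ∀ lam : ℝ, 0 < lam → lam ≤ 1 → ∀ b : ℂ, ‖b‖ ≤ M * Real.sqrt lam →
      (∫ x in B1, ‖x‖ ^ (((2 : ℝ) + s) * p) *
          (lam / (lam / 32 + ‖x ^ 2 - b‖ ^ 2) ^ 2) ^ p) ^ (1 / p) ≤
        C * lam ^ ((s : ℝ) / 4) * lam ^ (-(p - 1) / (2 * p)) := by
  have hp0 : 0 < p := by linarith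
  have hs3 : (s : ℝ) ≤ 3 := by exact_mod_cast hs
  set e : ℝ := ((2 : ℝ) + s) * p
  set K : ℝ := (128 * (1 + M ^ 2)) ^ (2 * p) * ∫ x : ℂ, (1 + ‖x‖ ^ 2) ^ (e / 2 - 4 * p)
  have hK : 0 ≤ K := mul_nonneg (by positivity) (integral_nonneg fun x ↦ by positivity)
  refine ⟨(K + 1) ^ (1 / p), by positivity, fun lam hlam _ b hb ↦ ?_⟩
  have hI := setIntegral_norm_rpow_mul_bubble_rpow_le B1 (e := e) (by positivity) hp0.le
    (by nlinarith) hlam hb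
  calc (∫ x in B1, ‖x‖ ^ e * bubble lam b x ^ p) ^ (1 / p)
      ≤ ((K + 1) * lam ^ (e / 4 - p + 1 / 2)) ^ (1 / p) := by
        gcongr
        · exact integral_nonneg fun x ↦ by unfold bubble; positivity
        · exact hI.trans (by gcongr; linarith)
    _ = (K + 1) ^ (1 / p) * lam ^ ((s : ℝ) / 4) * lam ^ (-(p - 1) / (2 * p)) := by
        rw [mul_rpow (by linarith) (by positivity), ← rpow_mul hlam.le, mul_assoc,
          ← rpow_add hlam]
        congr 2
        field_simp
        ring

/-- `L^p` estimates for the bubble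
`e^{W_{λ,b}(x)} = λ/(λ/32 + |x²-b|²)²`. -/
theorem stmt_17 (s : ℕ) (hs : s ≤ 3) (p : ℝ) (hp : 1 ≤ p) (M : ℝ) (hM : 0 < M) :
    ∃ C : ℝ, 0 < C ∧ ∀ lam : ℝ, 0 < lam → lam ≤ 1 → ∀ b : ℂ, ‖b‖ ≤ M * Real.sqrt lam →
      (∫ x in B1, ‖x‖ ^ (((2 : ℝ) + s) * p) *
          (lam / (lam / 32 + ‖x ^ 2 - b‖ ^ 2) ^ 2) ^ p) ^ (1 / p) ≤
        C * lam ^ ((s : ℝ) / 4) * lam ^ (-(p - 1) / (2 * p)) :=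
  stmt_17_general s hs p hp M
end
end
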